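/- arXiv:2505.13662 — 8 statements merged into one kernel-verified Lean document; each statement's English description precedes it below -/
import Mathlib

section
/- Let m ≥ 1, h ≥ 1, n ≥ 2 be integers, let X be a dataset of n real numbers with sorted order x_(1) ≤ … ≤ x_(n), and let X′ be obtained from X by removing the element at sorted position s. Then there exists an injective map F⁻ : Good_{m,n−1,h+1} → Good_{m,n−1,h} such that for every r̃ ∈ Good_{m,n−1,h+1}: (a) F⁻(r̃) = r̃ + e_{r̃}, where e_{r̃} satisfies e_{r̃}[i] = −1 if i ≥ j and e_{r̃}[i] = 0 if i < j, for some index j ∈ {1,…,m+1} depending on r̃; and (b) setting S_i = { x_(r̃_i−h), …, x_(r̃_i+h) } and S′_i = { x′_((F⁻(r̃))_i−h), …, x′_((F⁻(r̃))_i+h) }, one has Σ_{i=1}^m d_sub(S_i, S′_i) ≤ 2. -/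
/-- `Good m n h` is the set of vectors `(r_1, …, r_m) ∈ ℤ^m` (zero-indexed as
`Fin m → ℤ`) with `h ≤ r_1`, `r_{i-1} + 2h ≤ r_i` for `2 ≤ i ≤ m` and `r_m ≤ n - h`. -/
def Good (m : ℕ) (n h : ℤ) : Set (Fin m → ℤ) :=
  { r | (∀ i : Fin m, (i : ℕ) = 0 → h ≤ r i) ∧
        (∀ i j : Fin m, (i : ℕ) + 1 = (j : ℕ) → r i + 2 * h ≤ r j) ∧
        (∀ i : Fin m, (i : ℕ) = m - 1 → r i ≤ n - h) }

/-- `dsub S S'` is the number of single-element substitutions needed to transform the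
multiset `S` into the multiset `S'` (of the same size): `|S| - |S ∩ S'|`. -/
noncomputable def dsub (S S' : Multiset ℝ) : ℕ := S.card - (S ∩ S').card

/-- The shift predicate: coordinate `i` of `r` gets decremented. -/
def ShD (m : ℕ) (h s : ℤ) (r : Fin m → ℤ) (i : Fin m) : Prop :=
  s - h ≤ r i ∧ ((∃ p : Fin m, (p : ℕ) + 1 = (i : ℕ) ∧ s - h ≤ r p) ∨
    ((i : ℕ) = 0 ∧ r i = h + 1) ∨
    (∃ p : Fin m, (p : ℕ) + 1 = (i : ℕ) ∧ r i = r p + (2 * h + 2)))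

open Classical in
/-- The map. -/
noncomputable def FD (m : ℕ) (h s : ℤ) (r : Fin m → ℤ) (i : Fin m) : ℤ :=
  if ShD m h s r i then r i - 1 else r i

lemma dsub_self_eq (S : Multiset ℝ) : dsub S S = 0 := by
  classical
  have : S ∩ S = S := le_antisymm Multiset.inter_le_left (Multiset.le_inter le_rfl le_rfl)
  unfold dsub
  rw [this]
  omega

lemma same_block (x x' : ℤ → ℝ) (s : ℤ)
    (hx' : ∀ i : ℤ, x' i = if i < s then x i else x (i + 1)) (a b : ℤ) (hb : b < s) :
    (Finset.Icc a b).val.map x' = (Finset.Icc a b).val.map x := by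
  apply Multiset.map_congr rfl
  intro k hk
  rw [Finset.mem_val, Finset.mem_Icc] at hk
  rw [hx', if_pos (by omega)]

lemma icc_shift (a b : ℤ) :
    (Finset.Icc a b).val.map (fun k => k + 1) = (Finset.Icc (a + 1) (b + 1)).val := by
  rw [← Finset.map_add_right_Icc a b 1, Finset.map_val]
  apply Multiset.map_congr rfl
  intro k _
  simp

lemma shift_block (x x' : ℤ → ℝ) (s : ℤ)
    (hx' : ∀ i : ℤ, x' i = if i < s then x i else x (i + 1)) (a b : ℤ) (ha : s ≤ a) :
    (Finset.Icc a b).val.map x' = (Finset.Icc (a + 1) (b + 1)).val.map x := by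
  rw [← icc_shift a b, Multiset.map_map]
  apply Multiset.map_congr rfl
  intro k hk
  rw [Finset.mem_val, Finset.mem_Icc] at hk
  rw [hx', if_neg (by omega)]
  rfl

lemma dsub_zeroA (x x' : ℤ → ℝ) (s : ℤ)
    (hx' : ∀ i : ℤ, x' i = if i < s then x i else x (i + 1)) (a b : ℤ) (hb : b < s) :
    dsub ((Finset.Icc a b).val.map x) ((Finset.Icc a b).val.map x') = 0 := by
  rw [same_block x x' s hx' a b hb]
  exact dsub_self_eq _

lemma dsub_zeroB (x x' : ℤ → ℝ) (s : ℤ)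
    (hx' : ∀ i : ℤ, x' i = if i < s then x i else x (i + 1)) (a b : ℤ) (ha : s ≤ a) :
    dsub ((Finset.Icc (a + 1) (b + 1)).val.map x) ((Finset.Icc a b).val.map x') = 0 := by
  rw [shift_block x x' s hx' a b ha]
  exact dsub_self_eq _

lemma dsub_le_one (x x' : ℤ → ℝ) (s : ℤ)
    (hx' : ∀ i : ℤ, x' i = if i < s then x i else x (i + 1))
    (h rr y : ℤ) (hh : 0 ≤ h) (hy : y = rr ∨ y = rr - 1) :
    dsub ((Finset.Icc (rr - h) (rr + h)).val.map x)
      ((Finset.Icc (y - h) (y + h)).val.map x') ≤ 1 := by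
  classical
  have hyb : rr - 1 ≤ y ∧ y ≤ rr := by rcases hy with h' | h' <;> omega
  suffices H : ∃ W W' : Finset ℤ, W ⊆ Finset.Icc (rr - h) (rr + h) ∧
      W' ⊆ Finset.Icc (y - h) (y + h) ∧ W'.val.map x' = W.val.map x ∧
      2 * h ≤ (W.val.card : ℤ) by
    obtain ⟨W, W', hWI, hWJ, hmap, hcard⟩ := H
    have hT1 : W.val.map x ≤ (Finset.Icc (rr - h) (rr + h)).val.map x :=
      Multiset.map_le_map (Finset.val_le_iff.mpr hWI)
    have hT2 : W.val.map x ≤ (Finset.Icc (y - h) (y + h)).val.map x' := by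
      rw [← hmap]
      exact Multiset.map_le_map (Finset.val_le_iff.mpr hWJ)
    have hint := Multiset.card_le_card (Multiset.le_inter hT1 hT2)
    rw [Multiset.card_map] at hint
    have hSc : ((Finset.Icc (rr - h) (rr + h)).val.map x).card = (2 * h + 1).toNat := by
      rw [Multiset.card_map]
      show (Finset.Icc (rr - h) (rr + h)).card = _
      rw [Int.card_Icc]
      congr 1
      ring
    unfold dsub
    omega
  rcases lt_or_ge (y + h) s with hα | hs1
  · refine ⟨Finset.Icc (rr - h) (y + h), Finset.Icc (rr - h) (y + h),
      Finset.Icc_subset_Icc le_rfl (by omega), Finset.Icc_subset_Icc (by omega) le_rfl,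
      same_block x x' s hx' _ _ hα, ?_⟩
    rw [show (Finset.Icc (rr - h) (y + h)).val.card = (Finset.Icc (rr - h) (y + h)).card from rfl,
      Int.card_Icc]
    omega
  rcases le_or_gt s (y - h) with hβ | hs2
  · refine ⟨Finset.Icc (y - h + 1) (rr + h - 1 + 1), Finset.Icc (y - h) (rr + h - 1),
      Finset.Icc_subset_Icc (by omega) (by omega), Finset.Icc_subset_Icc le_rfl (by omega),
      shift_block x x' s hx' _ _ hβ, ?_⟩
    rw [show (Finset.Icc (y - h + 1) (rr + h - 1 + 1)).val.card
        = (Finset.Icc (y - h + 1) (rr + h - 1 + 1)).card from rfl, Int.card_Icc]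
    omega
  · have hd1 : Disjoint (Finset.Icc (rr - h) (s - 1)) (Finset.Icc (s + 1) (rr + h - 1 + 1)) := by
      rw [Finset.disjoint_left]
      intro k hk1 hk2
      rw [Finset.mem_Icc] at hk1 hk2
      omega
    have hd2 : Disjoint (Finset.Icc (rr - h) (s - 1)) (Finset.Icc s (rr + h - 1)) := by
      rw [Finset.disjoint_left]
      intro k hk1 hk2
      rw [Finset.mem_Icc] at hk1 hk2
      omega
    refine ⟨(Finset.Icc (rr - h) (s - 1)).disjUnion (Finset.Icc (s + 1) (rr + h - 1 + 1)) hd1,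
            (Finset.Icc (rr - h) (s - 1)).disjUnion (Finset.Icc s (rr + h - 1)) hd2,
            ?_, ?_, ?_, ?_⟩
    · intro k hk
      rw [Finset.mem_disjUnion] at hk
      rw [Finset.mem_Icc]
      rcases hk with hk | hk <;> rw [Finset.mem_Icc] at hk <;> omega
    · intro k hk
      rw [Finset.mem_disjUnion] at hk
      rw [Finset.mem_Icc]
      rcases hk with hk | hk <;> rw [Finset.mem_Icc] at hk <;> omega
    · show ((Finset.Icc (rr - h) (s - 1)).val + (Finset.Icc s (rr + h - 1)).val).map x'
        = ((Finset.Icc (rr - h) (s - 1)).val + (Finset.Icc (s + 1) (rr + h - 1 + 1)).val).map x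
      rw [Multiset.map_add, Multiset.map_add, same_block x x' s hx' (rr - h) (s - 1) (by omega),
        shift_block x x' s hx' s (rr + h - 1) le_rfl]
    · show (2 * h : ℤ) ≤
        (((Finset.Icc (rr - h) (s - 1)).val + (Finset.Icc (s + 1) (rr + h - 1 + 1)).val).card : ℤ)
      rw [Multiset.card_add,
        show (Finset.Icc (rr - h) (s - 1)).val.card = (Finset.Icc (rr - h) (s - 1)).card from rfl,
        show (Finset.Icc (s + 1) (rr + h - 1 + 1)).val.card
          = (Finset.Icc (s + 1) (rr + h - 1 + 1)).card from rfl,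
        Int.card_Icc, Int.card_Icc]
      omega

theorem stmt_1 (m : ℕ) (hm : 1 ≤ m) (n h s : ℤ) (hn : 2 ≤ n) (hh : 1 ≤ h)
    (hs : s ∈ Set.Icc 1 n)
    (x x' : ℤ → ℝ) (hmono : MonotoneOn x (Set.Icc 1 n))
    (hx' : ∀ i : ℤ, x' i = if i < s then x i else x (i + 1)) :
    ∃ F : (Fin m → ℤ) → (Fin m → ℤ),
      Set.InjOn F (Good m (n - 1) (h + 1)) ∧
      Set.MapsTo F (Good m (n - 1) (h + 1)) (Good m (n - 1) h) ∧
      ∀ rt ∈ Good m (n - 1) (h + 1),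
        (∃ j : ℕ, 1 ≤ j ∧ j ≤ m + 1 ∧ ∀ i : Fin m,
          F rt i = rt i + (if j ≤ (i : ℕ) + 1 then -1 else 0)) ∧
        (∑ i : Fin m,
          dsub ((Finset.Icc (rt i - h) (rt i + h)).val.map x)
               ((Finset.Icc (F rt i - h) (F rt i + h)).val.map x')) ≤ 2 := by
  classical
  have gap : ∀ r, r ∈ Good m (n - 1) (h + 1) → ∀ p q : Fin m,
      (p : ℕ) + 1 = (q : ℕ) → r p + (2 * h + 2) ≤ r q := by
    intro r hr p q hpq
    have := hr.2.1 p q hpq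
    omega
  have mono : ∀ r, r ∈ Good m (n - 1) (h + 1) → ∀ p q : Fin m,
      (p : ℕ) ≤ (q : ℕ) → r p ≤ r q := by
    intro r hr p q hpq
    obtain ⟨d, hd⟩ : ∃ d : ℕ, (q : ℕ) = (p : ℕ) + d := ⟨(q : ℕ) - (p : ℕ), by omega⟩
    clear hpq
    induction d generalizing q with
    | zero => exact le_of_eq (congrArg r (Fin.ext (by omega)))
    | succ d ih =>
      have hlt : (p : ℕ) + d < m := by have := q.isLt; omega
      obtain ⟨q', hq'⟩ : ∃ q' : Fin m, (q' : ℕ) = (p : ℕ) + d := ⟨⟨(p : ℕ) + d, hlt⟩, rfl⟩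
      have h1 := ih q' hq'
      have h2 := gap r hr q' q (by omega)
      omega
  have shup : ∀ r, r ∈ Good m (n - 1) (h + 1) → ∀ i q : Fin m,
      ShD m h s r i → (i : ℕ) ≤ (q : ℕ) → ShD m h s r q := by
    intro r hr i q hi hle
    rcases Nat.eq_or_lt_of_le hle with he | hlt
    · exact (Fin.ext he : i = q) ▸ hi
    · have hpm : (q : ℕ) - 1 < m := by have := q.isLt; omega
      obtain ⟨p, hpv⟩ : ∃ p : Fin m, (p : ℕ) = (q : ℕ) - 1 := ⟨⟨(q : ℕ) - 1, hpm⟩, rfl⟩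
      have h1 : r i ≤ r p := mono r hr i p (by omega)
      have h2 := gap r hr p q (by omega)
      have hi1 := hi.1
      exact ⟨by omega, Or.inl ⟨p, by omega, by omega⟩⟩
  refine ⟨FD m h s, ?_, ?_, ?_⟩
  · -- injectivity
    intro r hr r' hr' heq
    have asym : ∀ a b : Fin m → ℤ, a ∈ Good m (n - 1) (h + 1) → b ∈ Good m (n - 1) (h + 1) →
        FD m h s a = FD m h s b → ∀ i : Fin m, (∀ j : Fin m, (j : ℕ) < (i : ℕ) → a j = b j) →
        ShD m h s a i → ¬ ShD m h s b i → False := by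
      intro a b ha hb hab i hbelow hSa hSb
      have hFi : FD m h s a i = FD m h s b i := congrFun hab i
      unfold FD at hFi
      rw [if_pos hSa, if_neg hSb] at hFi
      obtain ⟨hA1, hA2⟩ := hSa
      rcases hA2 with ⟨p, hp, hps⟩ | ⟨h0, hv⟩ | ⟨p, hp, hv⟩
      · have hpb : a p = b p := hbelow p (by omega)
        have hgap := hb.2.1 p i hp
        exact hSb ⟨by omega, Or.inl ⟨p, hp, by omega⟩⟩
      · have := hb.1 i h0
        omega
      · have hpb : a p = b p := hbelow p (by omega)
        have := hb.2.1 p i hp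
        omega
    have step : ∀ i : Fin m, (∀ j : Fin m, (j : ℕ) < (i : ℕ) → r j = r' j) → r i = r' i := by
      intro i hbelow
      have hFi : FD m h s r i = FD m h s r' i := congrFun heq i
      by_cases h1 : ShD m h s r i <;> by_cases h2 : ShD m h s r' i
      · unfold FD at hFi; rw [if_pos h1, if_pos h2] at hFi; omega
      · exact (asym r r' hr hr' heq i hbelow h1 h2).elim
      · exact (asym r' r hr' hr heq.symm i (fun j hj => (hbelow j hj).symm) h2 h1).elim
      · unfold FD at hFi; rw [if_neg h1, if_neg h2] at hFi; exact hFi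
    have main : ∀ k : ℕ, ∀ i : Fin m, (i : ℕ) ≤ k → r i = r' i := by
      intro k
      induction k with
      | zero => exact fun i hi => step i (fun j hj => absurd hj (by omega))
      | succ k ih =>
        intro i hi
        by_cases hik : (i : ℕ) ≤ k
        · exact ih i hik
        · exact step i (fun j hj => ih j (by omega))
    funext i
    exact main (i : ℕ) i le_rfl
  · -- maps to
    intro r hr
    refine ⟨?_, ?_, ?_⟩
    · intro i h0
      have := hr.1 i h0
      unfold FD
      split <;> omega
    · intro i j hij
      have := hr.2.1 i j hij
      unfold FD
      split <;> split <;> omega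
    · intro i hi
      have := hr.2.2 i hi
      unfold FD
      split <;> omega
  · -- part (a) and (b)
    intro rt hrt
    constructor
    · -- existence of j
      set S : Finset (Fin m) := Finset.univ.filter (fun i => ShD m h s rt i) with hS
      have hScard : S.card ≤ m := by
        calc S.card ≤ Finset.univ.card := Finset.card_filter_le _ _
        _ = m := by simp
      have hiff : ∀ i : Fin m, ShD m h s rt i ↔ m - S.card ≤ (i : ℕ) := by
        intro i
        constructor
        · intro hi
          have hsub : Finset.Ici i ⊆ S := by
            intro k hk
            rw [hS, Finset.mem_filter]
            exact ⟨Finset.mem_univ k, shup rt hrt i k hi (Fin.le_def.mp (Finset.mem_Ici.mp hk))⟩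
          have hc := Finset.card_le_card hsub
          rw [Fin.card_Ici] at hc
          have := i.isLt
          omega
        · intro hle
          by_contra hni
          have hsub : S ⊆ Finset.Ioi i := by
            intro k hk
            rw [hS, Finset.mem_filter] at hk
            rw [Finset.mem_Ioi]
            rcases lt_or_ge i k with h' | h'
            · exact h'
            · exact absurd (shup rt hrt k i hk.2 (Fin.le_def.mp h')) hni
          have hc := Finset.card_le_card hsub
          rw [Fin.card_Ioi] at hc
          have := i.isLt
          omega
      refine ⟨m + 1 - S.card, by omega, by omega, ?_⟩
      intro i
      unfold FD
      by_cases hi : ShD m h s rt i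
      · rw [if_pos hi, if_pos (show m + 1 - S.card ≤ (i : ℕ) + 1 by
          have := (hiff i).mp hi; omega)]
        omega
      · rw [if_neg hi, if_neg (show ¬ (m + 1 - S.card ≤ (i : ℕ) + 1) by
          have hx2 : ¬ (m - S.card ≤ (i : ℕ)) := fun hc => hi ((hiff i).mpr hc)
          omega)]
        omega
    · -- the cost bound
      have hm0 : 0 < m := hm
      set crit : Fin m → Prop :=
        fun i => (¬ ShD m h s rt i ∧ s - h ≤ rt i) ∨ (ShD m h s rt i ∧ rt i ≤ s + h) with hcrit
      have huniq : ∀ i i' : Fin m, crit i → crit i' → i = i' := by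
        have hlt : ∀ i i' : Fin m, (i : ℕ) < (i' : ℕ) → crit i → crit i' → False := by
          intro i i' hv hc hc'
          have h1 : s - h ≤ rt i := by
            rcases hc with ⟨_, h'⟩ | ⟨hsh, _⟩
            · exact h'
            · exact hsh.1
          have hpm : (i' : ℕ) - 1 < m := by have := i'.isLt; omega
          obtain ⟨p, hpv⟩ : ∃ p : Fin m, (p : ℕ) = (i' : ℕ) - 1 := ⟨⟨(i' : ℕ) - 1, hpm⟩, rfl⟩
          have h2 : rt i ≤ rt p := mono rt hrt i p (by omega)
          have h3 := gap rt hrt p i' (by omega)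
          have hSi' : ShD m h s rt i' := ⟨by omega, Or.inl ⟨p, by omega, by omega⟩⟩
          rcases hc' with ⟨hnn, _⟩ | ⟨_, hub⟩
          · exact hnn hSi'
          · omega
        intro i i' hc hc'
        rcases lt_trichotomy ((i : ℕ)) ((i' : ℕ)) with hv | hv | hv
        · exact (hlt i i' hv hc hc').elim
        · exact Fin.ext hv
        · exact (hlt i' i hv hc' hc).elim
      have hterm0 : ∀ i : Fin m, ¬ crit i →
          dsub ((Finset.Icc (rt i - h) (rt i + h)).val.map x)
            ((Finset.Icc (FD m h s rt i - h) (FD m h s rt i + h)).val.map x') = 0 := by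
        intro i hnci
        by_cases hSh : ShD m h s rt i
        · have hgt : s + h < rt i := by
            by_contra hcon
            exact hnci (Or.inr ⟨hSh, by omega⟩)
          have hFv : FD m h s rt i = rt i - 1 := by unfold FD; rw [if_pos hSh]
          rw [hFv]
          have hz := dsub_zeroB x x' s hx' (rt i - 1 - h) (rt i - 1 + h) (by omega)
          have e2 : rt i - 1 - h + 1 = rt i - h := by ring
          have e3 : rt i - 1 + h + 1 = rt i + h := by ring
          rw [e2, e3] at hz
          exact hz
        · have hlt' : rt i + h < s := by
            by_contra hcon
            exact hnci (Or.inl ⟨hSh, by omega⟩)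
          have hFv : FD m h s rt i = rt i := by unfold FD; rw [if_neg hSh]
          rw [hFv]
          exact dsub_zeroA x x' s hx' _ _ hlt'
      set i0 : Fin m := if H : ∃ i : Fin m, crit i then H.choose else ⟨0, hm0⟩ with hi0
      have hnc : ∀ i : Fin m, i ≠ i0 → ¬ crit i := by
        intro i hne hci
        apply hne
        have H : ∃ i : Fin m, crit i := ⟨i, hci⟩
        rw [hi0, dif_pos H]
        exact huniq i H.choose hci H.choose_spec
      have hsum : (∑ i : Fin m, (if i = i0 then (1 : ℕ) else 0)) = 1 := by
        rw [Fintype.sum_ite_eq' i0 (fun _ => (1 : ℕ))]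
      refine le_trans (Finset.sum_le_sum (fun i _ => ?_)) (le_trans (le_of_eq hsum) (by omega))
      by_cases hii : i = i0
      · rw [if_pos hii]
        refine dsub_le_one x x' s hx' h (rt i) (FD m h s rt i) (by omega) ?_
        unfold FD
        split
        · exact Or.inr rfl
        · exact Or.inl rfl
      · rw [if_neg hii, hterm0 i (hnc i hii)]
end

section
/- Let m ≥ 1, h ≥ 1, n ≥ 1 be integers, let X be a dataset of n real numbers with sorted order x_(1) ≤ … ≤ x_(n), and let X′ be obtained from X by inserting a new element at sorted position s. Then there exists an injective map F⁺ : Good_{m,n,h+1} → Good_{m,n+1,h} such that for every r̃ ∈ Good_{m,n,h+1}: (a) F⁺(r̃) = r̃ + e_{r̃}, where e_{r̃} satisfies e_{r̃}[i] = 1 if i ≥ j and e_{r̃}[i] = 0 if i < j, for some index j ∈ {1,…,m+1} depending on r̃; and (b) setting S_i = { x_(r̃_i−h), …, x_(r̃_i+h) } and S′_i = { x′_((F⁺(r̃))_i−h), …, x′_((F⁺(r̃))_i+h) }, one has Σ_{i=1}^m d_sub(S_i, S′_i) ≤ 1. -/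
lemma ico_split (a b c : ℤ) (hab : a ≤ b) (hbc : b ≤ c) :
    (Finset.Ico a c).val = (Finset.Ico a b).val + (Finset.Ico b c).val := by
  rw [← Finset.Ico_union_Ico_eq_Ico hab hbc,
    ← Finset.disjUnion_eq_union _ _ (Finset.Ico_disjoint_Ico_consecutive a b c)]
  rfl

lemma ico_cons (a b : ℤ) (h : a < b) :
    (Finset.Ico a b).val = a ::ₘ (Finset.Ico (a+1) b).val := by
  rw [ico_split a (a+1) b (by omega) (by omega)]
  have : Finset.Ico a (a+1) = {a} := by ext t; simp; omega
  rw [this]; rfl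

lemma icc_ico (a b : ℤ) : Finset.Icc a b = Finset.Ico a (b+1) := by
  ext t; simp [Int.lt_add_one_iff]

lemma ico_shift (a b : ℤ) (f : ℤ → ℝ) :
    (Finset.Ico (a+1) (b+1)).val.map f = (Finset.Ico a b).val.map (fun t => f (t+1)) := by
  rw [← Finset.map_add_right_Ico a b 1]
  simp [Finset.map_val, Multiset.map_map, Function.comp, addRightEmbedding]

lemma dsub_le_one_s2 (T S S' : Multiset ℝ) (h1 : T ≤ S) (h2 : T ≤ S')
    (h3 : Multiset.card S ≤ Multiset.card T + 1) : dsub S S' ≤ 1 := by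
  have h4 : Multiset.card T ≤ Multiset.card (S ∩ S') :=
    Multiset.card_le_card (le_inf h1 h2)
  unfold dsub; omega

lemma dsub_eq_zero (S S' : Multiset ℝ) (h : S = S') : dsub S S' = 0 := by
  subst h
  have : S ∩ S = S := inf_idem S
  rw [dsub, this]; omega

/-- interval entirely below the insertion point -/
lemma case_lt (x x' : ℤ → ℝ) (s : ℤ) (hx'₁ : ∀ i : ℤ, i < s → x' i = x i)
    (a b : ℤ) (hb : b < s) :
    (Finset.Icc a b).val.map x' = (Finset.Icc a b).val.map x :=
  Multiset.map_congr rfl (fun t ht => hx'₁ t (by simp at ht; omega))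

/-- interval entirely at/above the insertion point, shifted by one -/
lemma case_ge (x x' : ℤ → ℝ) (s : ℤ) (hx'₂ : ∀ i : ℤ, s ≤ i → x' (i + 1) = x i)
    (a b : ℤ) (ha : s ≤ a) :
    (Finset.Icc (a+1) (b+1)).val.map x' = (Finset.Icc a b).val.map x := by
  rw [icc_ico, icc_ico, ico_shift a (b+1) x']
  exact Multiset.map_congr rfl (fun t ht => hx'₂ t (by simp at ht; omega))

/-- crossing interval -/
lemma case_cross (x x' : ℤ → ℝ) (s : ℤ) (hx'₁ : ∀ i : ℤ, i < s → x' i = x i)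
    (hx'₂ : ∀ i : ℤ, s ≤ i → x' (i + 1) = x i)
    (a b : ℤ) (h1 : a + 1 ≤ s) (h2 : s ≤ b) :
    dsub ((Finset.Icc a b).val.map x) ((Finset.Icc (a+1) (b+1)).val.map x') ≤ 1 := by
  apply dsub_le_one_s2 ((Finset.Ico (a+1) (b+1)).val.map x)
  · apply Multiset.map_le_map
    rw [Finset.val_le_iff]
    intro t ht
    simp at ht ⊢
    omega
  · rw [icc_ico, ico_split (a+1) s (b+1+1) (by omega) (by omega),
      ico_cons s (b+1+1) (by omega), Multiset.map_add, Multiset.map_cons,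
      ico_split (a+1) s (b+1) (by omega) (by omega), Multiset.map_add]
    have e1 : (Finset.Ico (a+1) s).val.map x' = (Finset.Ico (a+1) s).val.map x :=
      Multiset.map_congr rfl (fun t ht => hx'₁ t (by simp at ht; omega))
    have e2 : (Finset.Ico (s+1) (b+1+1)).val.map x' = (Finset.Ico s (b+1)).val.map x := by
      rw [ico_shift s (b+1) x']
      exact Multiset.map_congr rfl (fun t ht => hx'₂ t (by simp at ht; omega))
    rw [e1, e2]
    exact add_le_add le_rfl (Multiset.le_cons_self _ _)
  · simp only [Multiset.card_map]
    show (Finset.Icc a b).card ≤ (Finset.Ico (a+1) (b+1)).card + 1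
    rw [Int.card_Icc, Int.card_Ico]
    omega

theorem stmt_2 (m : ℕ) (hm : 1 ≤ m) (n h s : ℤ) (hn : 1 ≤ n) (hh : 1 ≤ h)
    (hs : s ∈ Set.Icc 1 (n + 1))
    (x x' : ℤ → ℝ) (hmono : MonotoneOn x (Set.Icc 1 n))
    (hx'₁ : ∀ i : ℤ, i < s → x' i = x i)
    (hx'₂ : ∀ i : ℤ, s ≤ i → x' (i + 1) = x i) :
    ∃ F : (Fin m → ℤ) → (Fin m → ℤ),
      Set.InjOn F (Good m n (h + 1)) ∧
      Set.MapsTo F (Good m n (h + 1)) (Good m (n + 1) h) ∧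
      ∀ rt ∈ Good m n (h + 1),
        (∃ j : ℕ, 1 ≤ j ∧ j ≤ m + 1 ∧ ∀ i : Fin m,
          F rt i = rt i + (if j ≤ (i : ℕ) + 1 then 1 else 0)) ∧
        (∑ i : Fin m,
          dsub ((Finset.Icc (rt i - h) (rt i + h)).val.map x)
               ((Finset.Icc (F rt i - h) (F rt i + h)).val.map x')) ≤ 1 := by
  classical
  set F : (Fin m → ℤ) → (Fin m → ℤ) :=
    fun r i => if s ≤ r i + h then r i + 1 else r i with hF
  set G : (Fin m → ℤ) → (Fin m → ℤ) :=
    fun r i => if s ≤ r i + h - 1 then r i - 1 else r i with hG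
  have hGF : ∀ r : Fin m → ℤ, G (F r) = r := by
    intro r
    funext i
    simp only [hF, hG]
    by_cases hp : s ≤ r i + h
    · rw [if_pos hp, if_pos (by omega)]; ring
    · rw [if_neg hp, if_neg (by omega)]
  refine ⟨F, ?_, ?_, ?_⟩
  · intro a _ b _ hab
    rw [← hGF a, ← hGF b, hab]
  · rintro rt ⟨h1, h2, h3⟩
    refine ⟨?_, ?_, ?_⟩
    · intro i hi
      have := h1 i hi
      simp only [hF]
      split <;> omega
    · intro i j hij
      have hg := h2 i j hij
      simp only [hF]
      by_cases hp : s ≤ rt i + h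
      · rw [if_pos hp, if_pos (by omega)]; omega
      · rw [if_neg hp]; split <;> omega
    · intro i hi
      have := h3 i hi
      simp only [hF]
      split <;> omega
  · rintro rt ⟨h1, h2, h3⟩
    -- gap lemma
    have key : ∀ d : ℕ, ∀ i j : Fin m, (j : ℕ) = (i : ℕ) + d + 1 →
        rt i + 2 * (h + 1) ≤ rt j := by
      intro d
      induction d with
      | zero => intro i j hij; exact h2 i j (by omega)
      | succ d ih =>
        intro i j hij
        have hlt : (i : ℕ) + d + 1 < m := by have := j.isLt; omega
        have hik := ih i ⟨(i : ℕ) + d + 1, hlt⟩ rfl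
        have hkj := h2 ⟨(i : ℕ) + d + 1, hlt⟩ j (by simp; omega)
        omega
    have hgap : ∀ i j : Fin m, (i : ℕ) < (j : ℕ) → rt i + 2 * (h + 1) ≤ rt j := by
      intro i j hij
      exact key ((j : ℕ) - (i : ℕ) - 1) i j (by omega)
    have hmono' : ∀ i j : Fin m, (i : ℕ) ≤ (j : ℕ) → rt i ≤ rt j := by
      intro i j hij
      rcases eq_or_lt_of_le hij with he | hl
      · have : i = j := Fin.ext he
        rw [this]
      · have := hgap i j hl; omega
    constructor
    · -- existence of the threshold j
      by_cases hex : (Finset.univ.filter (fun i : Fin m => s ≤ rt i + h)).Nonempty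
      · set i0 := (Finset.univ.filter (fun i : Fin m => s ≤ rt i + h)).min' hex with hi0
        have hP0 : s ≤ rt i0 + h := by
          have := Finset.min'_mem _ hex
          simp only [Finset.mem_filter] at this
          exact this.2
        refine ⟨(i0 : ℕ) + 1, by omega, by have := i0.isLt; omega, ?_⟩
        intro i
        simp only [hF]
        by_cases hp : s ≤ rt i + h
        · have hle : i0 ≤ i := Finset.min'_le _ _ (by simp [hp])
          rw [if_pos hp, if_pos (by exact_mod_cast Nat.add_le_add_right hle 1)]
        · have hni : ¬ ((i0 : ℕ) + 1 ≤ (i : ℕ) + 1) := by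
            intro hc
            have : rt i0 ≤ rt i := hmono' i0 i (by omega)
            omega
          rw [if_neg hp, if_neg hni]; omega
      · refine ⟨m + 1, by omega, le_refl _, ?_⟩
        intro i
        have hp : ¬ s ≤ rt i + h := by
          intro hc
          exact hex ⟨i, by simp [hc]⟩
        have hni : ¬ (m + 1 ≤ (i : ℕ) + 1) := by have := i.isLt; omega
        simp only [hF]
        rw [if_neg hp, if_neg hni]; omega
    · -- sum bound
      set C : Fin m → Prop := fun i => rt i - h + 1 ≤ s ∧ s ≤ rt i + h with hC
      have hterm : ∀ i : Fin m,
          dsub ((Finset.Icc (rt i - h) (rt i + h)).val.map x)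
               ((Finset.Icc (F rt i - h) (F rt i + h)).val.map x')
          ≤ if C i then 1 else 0 := by
        intro i
        by_cases hc : C i
        · rw [if_pos hc]
          obtain ⟨hc1, hc2⟩ := hc
          have hFi : F rt i = rt i + 1 := by simp only [hF]; rw [if_pos (by omega)]
          rw [hFi]
          have e1 : rt i + 1 - h = (rt i - h) + 1 := by ring
          have e2 : rt i + 1 + h = (rt i + h) + 1 := by ring
          rw [e1, e2]
          exact case_cross x x' s hx'₁ hx'₂ _ _ (by omega) (by omega)
        · rw [if_neg hc]
          simp only [hC, not_and, not_le] at hc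
          by_cases hp : s ≤ rt i + h
          · have hs' : s ≤ rt i - h := by
              rcases lt_or_ge s (rt i - h + 1) with h' | h'
              · omega
              · exact absurd hp (by omega)
            have hFi : F rt i = rt i + 1 := by simp only [hF]; rw [if_pos hp]
            rw [hFi]
            have e1 : rt i + 1 - h = (rt i - h) + 1 := by ring
            have e2 : rt i + 1 + h = (rt i + h) + 1 := by ring
            rw [e1, e2]
            exact le_of_eq (dsub_eq_zero _ _ (case_ge x x' s hx'₂ (rt i - h) (rt i + h) hs').symm)
          · have hFi : F rt i = rt i := by simp only [hF]; rw [if_neg hp]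
            rw [hFi]
            exact le_of_eq (dsub_eq_zero _ _
              (case_lt x x' s hx'₁ (rt i - h) (rt i + h) (by omega)).symm)
      calc ∑ i : Fin m, dsub ((Finset.Icc (rt i - h) (rt i + h)).val.map x)
               ((Finset.Icc (F rt i - h) (F rt i + h)).val.map x')
          ≤ ∑ i : Fin m, (if C i then 1 else 0) :=
            Finset.sum_le_sum (fun i _ => hterm i)
        _ = (Finset.univ.filter C).card := by
            rw [Finset.card_filter]
        _ ≤ 1 := by
            apply Finset.card_le_one.2
            intro i hi j hj
            simp only [Finset.mem_filter, hC] at hi hj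
            by_contra hne
            rcases Nat.lt_or_ge (i : ℕ) (j : ℕ) with hl | hge
            · have := hgap i j hl; omega
            · have hl : (j : ℕ) < (i : ℕ) := by
                rcases Nat.lt_or_ge (j : ℕ) (i : ℕ) with h' | h'
                · exact h'
                · exact absurd (Fin.ext (le_antisymm hge h')) (fun hh => hne hh.symm)
              have := hgap j i hl; omega
end

section
/- Fix integers s, h ≥ 1, m ≥ 1, n ≥ 1, and define G : ℤ^m → ℤ^m coordinatewise by G(r̃)_i = r̃_i + 1 if r̃_i − h > s, and G(r̃)_i = r̃_i otherwise. Then: (i) G is injective on all of ℤ^m; (ii) G maps Good_{m,n,h} into Good_{m,n+1,h}; and (iii) for every r̃ ∈ Good_{m,n,h} there exists an index j ∈ {1,…,m+1} such that G(r̃)_i − r̃_i = 1 for all i ≥ j and G(r̃)_i − r̃_i = 0 for all i < j. -/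
theorem stmt_3 (s h : ℤ) (hs : 1 ≤ s) (hh : 1 ≤ h) (m : ℕ) (hm : 1 ≤ m)
    (n : ℤ) (hn : 1 ≤ n)
    (G : (Fin m → ℤ) → (Fin m → ℤ))
    (hG : ∀ r : Fin m → ℤ, ∀ i : Fin m,
      G r i = if s < r i - h then r i + 1 else r i) :
    Function.Injective G ∧
    Set.MapsTo G (Good m n h) (Good m (n + 1) h) ∧
    ∀ r ∈ Good m n h, ∃ j : ℕ, 1 ≤ j ∧ j ≤ m + 1 ∧ ∀ i : Fin m,
      (j ≤ (i : ℕ) + 1 → G r i - r i = 1) ∧ ((i : ℕ) + 1 < j → G r i - r i = 0) := by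
  classical
  have hmono : ∀ x y : ℤ, x < y →
      (if s < x - h then x + 1 else x) < (if s < y - h then y + 1 else y) := by
    intro x y hxy
    by_cases hx : s < x - h
    · have hy : s < y - h := by omega
      simp only [hx, hy, if_true]; omega
    · by_cases hy : s < y - h <;> simp only [hx, hy, if_true, if_false] <;> omega
  refine ⟨?_, ?_, ?_⟩
  · intro r r' hrr
    funext i
    have heq := congrFun hrr i
    rw [hG, hG] at heq
    by_contra hne
    rcases lt_or_gt_of_ne hne with hlt | hlt
    · exact absurd heq (ne_of_lt (hmono _ _ hlt))
    · exact absurd heq.symm (ne_of_lt (hmono _ _ hlt))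
  · rintro r ⟨h1, h2, h3⟩
    refine ⟨?_, ?_, ?_⟩
    · intro i hi; rw [hG]; have := h1 i hi; split <;> omega
    · intro i j hij; rw [hG, hG]
      have hij2 := h2 i j hij
      by_cases hi : s < r i - h
      · have hj : s < r j - h := by omega
        simp only [hi, hj, if_true]; omega
      · simp only [hi, if_false]; split <;> omega
    · intro i hi; rw [hG]; have := h3 i hi; split <;> omega
  · rintro r ⟨h1, h2, h3⟩
    have mono : ∀ a b : Fin m, a.val ≤ b.val → r a ≤ r b := by
      intro a b hab
      obtain ⟨d, hd⟩ := Nat.le.dest hab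
      induction d generalizing b with
      | zero =>
        have : a = b := Fin.ext (by omega)
        subst this; rfl
      | succ d ih =>
        have hlt : a.val + d < m := by omega
        have hmid := ih ⟨a.val + d, hlt⟩ (by simp) (by simp)
        have hstep := h2 ⟨a.val + d, hlt⟩ b (by simp; omega)
        omega
    set S := Finset.univ.filter (fun i : Fin m => s < r i - h) with hS
    by_cases hne : S.Nonempty
    · refine ⟨(S.min' hne).val + 1, by omega, by have := (S.min' hne).isLt; omega, ?_⟩
      intro i
      constructor
      · intro hji
        have hmin : s < r (S.min' hne) - h := by
          have := S.min'_mem hne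
          simpa [hS] using this
        have hle : r (S.min' hne) ≤ r i := mono _ _ (by omega)
        rw [hG, if_pos (by omega)]; ring
      · intro hji
        rw [hG, if_neg, sub_self]
        intro hcon
        have hiS : i ∈ S := by simp [hS, hcon]
        have := Fin.le_def.mp (S.min'_le i hiS)
        omega
    · refine ⟨m + 1, by omega, le_refl _, ?_⟩
      intro i
      refine ⟨fun hji => absurd hji (by have := i.isLt; omega), fun _ => ?_⟩
      rw [hG, if_neg, sub_self]
      intro hcon
      exact hne ⟨i, by simp [hS, hcon]⟩
end

section
/- Let m ≥ 1, h ≥ 1, n ≥ 1 be integers, let X be a dataset of n real numbers with sorted order x_(1) ≤ … ≤ x_(n), let X′ be obtained from X by inserting a new element at sorted position s, and define G : ℤ^m → ℤ^m by G(r̃)_i = r̃_i + 1 if r̃_i − h > s and G(r̃)_i = r̃_i otherwise. Then for every r̃ ∈ Good_{m,n,h+1}, setting S_i = { x_(r̃_i−h), …, x_(r̃_i+h) } and S′_i = { x′_(G(r̃)_i−h), …, x′_(G(r̃)_i+h) }: S_i = S′_i as multisets for every i with s ∉ [r̃_i − h, r̃_i + h], there is at most one index i with s ∈ [r̃_i −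 h, r̃_i + h], and Σ_{i=1}^m d_sub(S_i, S′_i) ≤ 1. -/
lemma split_val (a b c : ℤ) (h1 : a ≤ b + 1) (h2 : b ≤ c) :
    (Finset.Icc a c).val = (Finset.Icc a b).val + (Finset.Icc (b+1) c).val := by
  have hd : Disjoint (Finset.Icc a b) (Finset.Icc (b+1) c) := by
    rw [Finset.disjoint_left]; intro j hj hj'; simp only [Finset.mem_Icc] at hj hj'; omega
  have : Finset.Icc a c = (Finset.Icc a b).disjUnion (Finset.Icc (b+1) c) hd := by
    ext j; simp only [Finset.mem_Icc, Finset.mem_disjUnion]; omega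
  rw [this]; rfl

lemma shift_val (a b : ℤ) :
    (Finset.Icc (a+1) (b+1)).val = (Finset.Icc a b).val.map (· + 1) := by
  rw [← Finset.map_add_right_Icc a b 1]; rfl

theorem stmt_5 (m : ℕ) (hm : 1 ≤ m) (n h s : ℤ) (hn : 1 ≤ n) (hh : 1 ≤ h)
    (hs : s ∈ Set.Icc 1 (n + 1))
    (x x' : ℤ → ℝ) (hmono : MonotoneOn x (Set.Icc 1 n))
    (hx'₁ : ∀ i : ℤ, i < s → x' i = x i)
    (hx'₂ : ∀ i : ℤ, s ≤ i → x' (i + 1) = x i)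
    (G : (Fin m → ℤ) → (Fin m → ℤ))
    (hG : ∀ r : Fin m → ℤ, ∀ i : Fin m,
      G r i = if s < r i - h then r i + 1 else r i) :
    ∀ rt ∈ Good m n (h + 1),
      (∀ i : Fin m, s ∉ Set.Icc (rt i - h) (rt i + h) →
        ((Finset.Icc (rt i - h) (rt i + h)).val.map x)
          = ((Finset.Icc (G rt i - h) (G rt i + h)).val.map x')) ∧
      (∀ i i' : Fin m, s ∈ Set.Icc (rt i - h) (rt i + h) →
        s ∈ Set.Icc (rt i' - h) (rt i' + h) → i = i') ∧
      (∑ i : Fin m,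
        dsub ((Finset.Icc (rt i - h) (rt i + h)).val.map x)
             ((Finset.Icc (G rt i - h) (G rt i + h)).val.map x')) ≤ 1 := by
  intro rt hrt
  obtain ⟨hg1, hg2, hg3⟩ := hrt
  -- chain inequality
  have hchain : ∀ (j : ℕ) (hj : j < m) (i : ℕ) (hi : i < m), i < j →
      rt ⟨i, hi⟩ + 2 * (h + 1) ≤ rt ⟨j, hj⟩ := by
    intro j
    induction j with
    | zero => omega
    | succ k ih =>
      intro hj i hi hij
      have hk : k < m := by omega
      have hcons : rt ⟨k, hk⟩ + 2 * (h + 1) ≤ rt ⟨k+1, hj⟩ := hg2 ⟨k, hk⟩ ⟨k+1, hj⟩ rfl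
      rcases Nat.lt_or_ge i k with hik | hik
      · have := ih hk i hi hik
        omega
      · have : i = k := by omega
        subst this
        exact hcons
  -- Part 1
  have h1claim : ∀ i : Fin m, s ∉ Set.Icc (rt i - h) (rt i + h) →
      ((Finset.Icc (rt i - h) (rt i + h)).val.map x)
        = ((Finset.Icc (G rt i - h) (G rt i + h)).val.map x') := by
    intro i hi
    rw [Set.mem_Icc] at hi; push_neg at hi
    by_cases hc : s < rt i - h
    · have hGi : G rt i = rt i + 1 := by rw [hG]; simp [hc]
      rw [hGi]
      have e1 : rt i + 1 - h = (rt i - h) + 1 := by ring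
      have e2 : rt i + 1 + h = (rt i + h) + 1 := by ring
      rw [e1, e2, shift_val, Multiset.map_map]
      refine Multiset.map_congr rfl ?_
      intro j hj
      rw [Finset.mem_val, Finset.mem_Icc] at hj
      exact (hx'₂ j (by omega)).symm
    · have hs2 : rt i + h < s := hi (by omega)
      have hGi : G rt i = rt i := by rw [hG]; simp [hc]
      rw [hGi]
      refine Multiset.map_congr rfl ?_
      intro j hj
      rw [Finset.mem_val, Finset.mem_Icc] at hj
      exact (hx'₁ j (by omega)).symm
  -- Part 2
  have h2claim : ∀ i i' : Fin m, s ∈ Set.Icc (rt i - h) (rt i + h) →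
      s ∈ Set.Icc (rt i' - h) (rt i' + h) → i = i' := by
    intro i i' hi hi'
    rw [Set.mem_Icc] at hi hi'
    by_contra hne
    rcases Nat.lt_or_ge (i : ℕ) (i' : ℕ) with hlt | hge
    · have := hchain (i' : ℕ) i'.2 (i : ℕ) i.2 hlt
      simp only [Fin.eta] at this
      omega
    · have hlt : (i' : ℕ) < (i : ℕ) := by
        rcases Nat.lt_or_ge (i' : ℕ) (i : ℕ) with h' | h'
        · exact h'
        · exact absurd (Fin.ext (by omega)) hne
      have := hchain (i : ℕ) i.2 (i' : ℕ) i'.2 hlt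
      simp only [Fin.eta] at this
      omega
  -- per-index bound in the overlapping case
  have h3each : ∀ i : Fin m, s ∈ Set.Icc (rt i - h) (rt i + h) →
      dsub ((Finset.Icc (rt i - h) (rt i + h)).val.map x)
           ((Finset.Icc (G rt i - h) (G rt i + h)).val.map x') ≤ 1 := by
    intro i hi
    rw [Set.mem_Icc] at hi
    have hGi : G rt i = rt i := by rw [hG]; simp; omega
    rw [hGi]
    set a := rt i - h with ha
    set b := rt i + h with hb
    have hab1 : a ≤ s := hi.1
    have hab2 : s ≤ b := hi.2
    have hab : a + 2 * h = b := by omega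
    set S : Multiset ℝ := (Finset.Icc a b).val.map x with hS
    set S' : Multiset ℝ := (Finset.Icc a b).val.map x' with hS'
    set T : Multiset ℝ := (Finset.Icc a (b-1)).val.map x with hT
    have hTS : T ≤ S := by
      refine Multiset.map_le_map ?_
      rw [Finset.val_le_iff]
      exact Finset.Icc_subset_Icc le_rfl (by omega)
    have hs1 : s - 1 + 1 = s := by ring
    have hTS' : T ≤ S' := by
      have hsplitT : (Finset.Icc a (b-1)).val
          = (Finset.Icc a (s-1)).val + (Finset.Icc s (b-1)).val := by
        rw [split_val a (s-1) (b-1) (by omega) (by omega), hs1]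
      have hsplitS : (Finset.Icc a b).val
          = (Finset.Icc a (s-1)).val + ((Finset.Icc s s).val + (Finset.Icc (s+1) b).val) := by
        rw [split_val a (s-1) b (by omega) (by omega), hs1,
            split_val s s b (by omega) (by omega)]
      have hC : ((Finset.Icc (s+1) b).val.map x')
          = (Finset.Icc s (b-1)).val.map x := by
        have hsv := shift_val s (b-1)
        rw [show b - 1 + 1 = b from by ring] at hsv
        rw [hsv, Multiset.map_map]
        refine Multiset.map_congr rfl ?_
        intro j hj
        rw [Finset.mem_val, Finset.mem_Icc] at hj
        exact hx'₂ j (by omega)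
      have hA : ((Finset.Icc a (s-1)).val.map x')
          = (Finset.Icc a (s-1)).val.map x := by
        refine Multiset.map_congr rfl ?_
        intro j hj
        rw [Finset.mem_val, Finset.mem_Icc] at hj
        exact hx'₁ j (by omega)
      rw [hS', hsplitS, Multiset.map_add, Multiset.map_add, hA, hC,
          hT, hsplitT, Multiset.map_add]
      exact add_le_add le_rfl (Multiset.le_add_left _ _)
    have hTint : T ≤ S ∩ S' := Multiset.le_inter hTS hTS'
    have hcardT : Multiset.card T = (2*h).toNat := by
      rw [hT, Multiset.card_map, ← Finset.card_def, Int.card_Icc]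
      congr 1; omega
    have hcardS : Multiset.card S = (2*h+1).toNat := by
      rw [hS, Multiset.card_map, ← Finset.card_def, Int.card_Icc]
      congr 1; omega
    have hle := Multiset.card_le_card hTint
    rw [hcardT] at hle
    rw [dsub, hcardS]
    omega
  refine ⟨h1claim, h2claim, ?_⟩
  by_cases hex : ∃ i : Fin m, s ∈ Set.Icc (rt i - h) (rt i + h)
  · obtain ⟨i₀, hi₀⟩ := hex
    calc (∑ i : Fin m,
        dsub ((Finset.Icc (rt i - h) (rt i + h)).val.map x)
             ((Finset.Icc (G rt i - h) (G rt i + h)).val.map x'))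
        ≤ ∑ i : Fin m, (if i = i₀ then 1 else 0) := by
          refine Finset.sum_le_sum ?_
          intro i _
          by_cases hii : i = i₀
          · subst hii; simpa using h3each i hi₀
          · simp only [hii, if_false]
            have hni : s ∉ Set.Icc (rt i - h) (rt i + h) := fun hmem =>
              hii (h2claim i i₀ hmem hi₀)
            have heq := h1claim i hni
            rw [dsub, heq]
            have : ((Finset.Icc (G rt i - h) (G rt i + h)).val.map x')
                ∩ ((Finset.Icc (G rt i - h) (G rt i + h)).val.map x')
                = ((Finset.Icc (G rt i - h) (G rt i + h)).val.map x') :=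
              le_antisymm Multiset.inter_le_left (Multiset.le_inter le_rfl le_rfl)
            rw [this]
            omega
      _ = 1 := by
          rw [Finset.sum_ite_eq']
          simp
  · push_neg at hex
    have : ∀ i : Fin m, dsub ((Finset.Icc (rt i - h) (rt i + h)).val.map x)
             ((Finset.Icc (G rt i - h) (G rt i + h)).val.map x') = 0 := by
      intro i
      have heq := h1claim i (hex i)
      rw [dsub, heq]
      have : ((Finset.Icc (G rt i - h) (G rt i + h)).val.map x')
          ∩ ((Finset.Icc (G rt i - h) (G rt i + h)).val.map x')
          = ((Finset.Icc (G rt i - h) (G rt i + h)).val.map x') :=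
        le_antisymm Multiset.inter_le_left (Multiset.le_inter le_rfl le_rfl)
      rw [this]
      omega
    simp [this]
end

section
/- Let D be a type equipped with a binary adjacency relation ~, let Y be a finite nonempty type, let ε > 0 and δ ≥ 0 with δ·|Y|/(e^ε − 1) ≤ 1, and let A : D → PMF(Y) be a mechanism satisfying (ε, δ)-differential privacy: for all X ~ X′ and every subset S ⊆ Y, Pr[A(X) ∈ S] ≤ e^ε · Pr[A(X′) ∈ S] + δ. Set γ = δ·|Y|/(e^ε − 1) and define the mechanism Ã(X) by Ã(X)({y}) = (1−γ)·A(X)({y}) + γ/|Y| for every y ∈ Y. Then à satisfies (ε, 0)-differential privacy: for all X ~ X′ and all y ∈ Y, Ã(X)({y}) ≤ e^ε · Ã(X′)({y}). -/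
theorem stmt_7 {D : Type*} (adj : D → D → Prop)
    {Y : Type*} [Fintype Y] [Nonempty Y]
    (ε δ : ℝ) (hε : 0 < ε) (hδ : 0 ≤ δ)
    (hγ : δ * (Fintype.card Y) / (Real.exp ε - 1) ≤ 1)
    (A : D → PMF Y)
    (hDP : ∀ X X' : D, adj X X' → ∀ S : Finset Y,
      ∑ y ∈ S, ((A X) y).toReal ≤ Real.exp ε * ∑ y ∈ S, ((A X') y).toReal + δ) :
    ∀ X X' : D, adj X X' → ∀ y : Y,
      (1 - δ * (Fintype.card Y) / (Real.exp ε - 1)) * ((A X) y).toReal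
          + (δ * (Fintype.card Y) / (Real.exp ε - 1)) / (Fintype.card Y)
        ≤ Real.exp ε *
          ((1 - δ * (Fintype.card Y) / (Real.exp ε - 1)) * ((A X') y).toReal
            + (δ * (Fintype.card Y) / (Real.exp ε - 1)) / (Fintype.card Y)) := by
  intro X X' h y
  have key := hDP X X' h {y}
  simp only [Finset.sum_singleton] at key
  set n : ℝ := (Fintype.card Y : ℝ) with hn
  have hn0 : 0 < n := by
    rw [hn]; exact_mod_cast Fintype.card_pos (α := Y)
  have hE : 0 < Real.exp ε - 1 := by
    have := Real.one_lt_exp_iff.mpr hε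
    linarith
  set γ : ℝ := δ * n / (Real.exp ε - 1) with hγdef
  have hγ0 : 0 ≤ γ := by positivity
  have h1γ : 0 ≤ 1 - γ := by linarith
  have hEγ : (Real.exp ε - 1) * (γ / n) = δ := by
    field_simp [hγdef]
    rw [hγdef]; field_simp
  have ha' : 0 ≤ ((A X') y).toReal := ENNReal.toReal_nonneg
  nlinarith [mul_le_mul_of_nonneg_left key h1γ, mul_nonneg hγ0 hδ,
    mul_nonneg h1γ ha']
end

section
/- Let I be a countable type, G ⊆ I a subset, ν a probability distribution on I, F : G → I an injective function, and ε₁, ε₂, δ ≥ 0 real numbers such that ν(I ∖ G) ≤ δ and ν({g}) ≤ e^{ε₁} · ν({F(g)}) for all g ∈ G. Let (Ω, 𝔽) be a measurable space and let κ, κ′ assign to each i ∈ I a probability measure on Ω such that κ(g)(E) ≤ e^{ε₂} · κ′(F(g))(E) for all g ∈ G and all measurable E ⊆ Ω. Then for every measurable E ⊆ Ω: Σ_{i ∈ I} ν({i}) · κ(i)(E) ≤ δ + e^{ε₁+ε₂} · Σ_{i ∈ I} ν({i}) · κ′(i)(E). -/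
open MeasureTheory

theorem stmt_8 {I : Type*} [Countable I] (G : Set I) (ν : PMF I)
    (F : I → I) (hFinj : Set.InjOn F G)
    (ε₁ ε₂ δ : ℝ) (hε₁ : 0 ≤ ε₁) (hε₂ : 0 ≤ ε₂) (hδ : 0 ≤ δ)
    (hνG : ν.toOuterMeasure Gᶜ ≤ ENNReal.ofReal δ)
    (hν : ∀ g ∈ G, ν g ≤ ENNReal.ofReal (Real.exp ε₁) * ν (F g))
    {Ω : Type*} [MeasurableSpace Ω]
    (κ κ' : I → Measure Ω)
    (hκ : ∀ i, IsProbabilityMeasure (κ i))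
    (hκ' : ∀ i, IsProbabilityMeasure (κ' i))
    (hDP : ∀ g ∈ G, ∀ E : Set Ω, MeasurableSet E →
      κ g E ≤ ENNReal.ofReal (Real.exp ε₂) * κ' (F g) E) :
    ∀ E : Set Ω, MeasurableSet E →
      ∑' i : I, ν i * κ i E
        ≤ ENNReal.ofReal δ
          + ENNReal.ofReal (Real.exp (ε₁ + ε₂)) * ∑' i : I, ν i * κ' i E := by
  intro E hE
  have hsplit : (∑' i : I, ν i * κ i E)
      = (∑' i : ↥Gᶜ, ν i * κ (i : I) E) + ∑' i : G, ν i * κ (i : I) E := by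
    rw [← Summable.tsum_add_tsum_compl (s := Gᶜ) ENNReal.summable ENNReal.summable, compl_compl]
  rw [hsplit]
  have h1 : (∑' i : ↥Gᶜ, ν i * κ (i : I) E) ≤ ENNReal.ofReal δ := by
    refine le_trans ?_ hνG
    rw [ν.toOuterMeasure_apply, ← tsum_subtype]
    refine ENNReal.tsum_le_tsum fun i => ?_
    calc ν i * κ (i : I) E ≤ ν i * 1 := by
          gcongr
          exact prob_le_one
      _ = ν i := mul_one _
  have h2 : (∑' i : G, ν i * κ (i : I) E)
      ≤ ENNReal.ofReal (Real.exp (ε₁ + ε₂)) * ∑' i : I, ν i * κ' i E := by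
    have step : (∑' i : G, ν i * κ (i : I) E)
        ≤ ∑' i : G, ENNReal.ofReal (Real.exp (ε₁ + ε₂)) * (ν (F i) * κ' (F i) E) := by
      refine ENNReal.tsum_le_tsum fun i => ?_
      have h3 := hν i i.2
      have h4 := hDP i i.2 E hE
      calc ν i * κ (i : I) E
          ≤ (ENNReal.ofReal (Real.exp ε₁) * ν (F i)) *
            (ENNReal.ofReal (Real.exp ε₂) * κ' (F i) E) := by
            exact mul_le_mul' h3 h4
        _ = (ENNReal.ofReal (Real.exp ε₁) * ENNReal.ofReal (Real.exp ε₂)) *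
            (ν (F i) * κ' (F i) E) := by ring
        _ = ENNReal.ofReal (Real.exp (ε₁ + ε₂)) * (ν (F i) * κ' (F i) E) := by
            rw [← ENNReal.ofReal_mul (Real.exp_nonneg _), ← Real.exp_add]
    rw [ENNReal.tsum_mul_left] at step
    refine step.trans ?_
    gcongr
    have hinj : Function.Injective (fun i : G => F i) := fun a b h => by
      exact Subtype.ext (hFinj a.2 b.2 h)
    exact ENNReal.tsum_comp_le_tsum_of_injective hinj (fun i => ν i * κ' i E)
  exact add_le_add h1 h2
end

section
/- Let γ_1, …, γ_k be independent real random variables where γ_i has the Laplace distribution with scale b_i > 0. Let Y = Σ_{i=1}^k γ_i, let b_M = max_i b_i, let δ ∈ (0,1), and let ν = max{ √(Σ_{i=1}^k b_i²), b_M · √(ln(2/δ)) }. Then Pr[ |Y| > ν·√(8·ln(2/δ)) ] ≤ δ. -/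
open MeasureTheory ProbabilityTheory

/-- The Laplace distribution on `ℝ` with scale `b`: the measure with density
`x ↦ (1/(2b)) · exp (-|x|/b)` with respect to Lebesgue measure. -/
noncomputable def laplaceMeasure (b : ℝ) : Measure ℝ :=
  (volume : Measure ℝ).withDensity
    (fun x => ENNReal.ofReal ((1 / (2 * b)) * Real.exp (-|x| / b)))

open Real Set
open scoped ENNReal NNReal

lemma integral_exp_neg_mul_Ioi' {c : ℝ} (hc : 0 < c) :
    ∫ x in Ioi (0:ℝ), exp (-(c * x)) = c⁻¹ := by
  have h := integral_comp_mul_left_Ioi (fun x => exp (-x)) 0 hc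
  simp only [mul_zero, integral_exp_neg_Ioi_zero, smul_eq_mul, mul_one] at h
  exact h

lemma integrableOn_exp_neg_mul_Ioi' {c : ℝ} (hc : 0 < c) :
    IntegrableOn (fun x => exp (-(c * x))) (Ioi (0:ℝ)) := by
  simpa [neg_mul] using exp_neg_integrableOn_Ioi 0 hc

lemma integral_exp_mul_Iic' {s : ℝ} (hs : 0 < s) :
    ∫ x in Iic (0:ℝ), exp (s * x) = s⁻¹ := by
  have h := integral_comp_neg_Iic (0:ℝ) (fun x => exp (-(s * x)))
  simp only [mul_neg, neg_neg, neg_zero] at h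
  rw [h, integral_exp_neg_mul_Ioi' hs]

lemma integrableOn_exp_mul_Iic' {s : ℝ} (hs : 0 < s) :
    IntegrableOn (fun x => exp (s * x)) (Iic (0:ℝ)) := by
  have m : MeasurableEmbedding fun x : ℝ => -x :=
    (Homeomorph.neg ℝ).isClosedEmbedding.measurableEmbedding
  have h : IntegrableOn (fun x => exp (s * x)) (Iic (0:ℝ))
      (Measure.map (fun x : ℝ => -x) volume) := by
    rw [m.integrableOn_map_iff]
    have : ((fun x : ℝ => -x) ⁻¹' Iic 0) = Ici (0:ℝ) := by
      ext x; simp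
    rw [this]
    have := (integrableOn_exp_neg_mul_Ioi' hs)
    rw [← integrableOn_Ici_iff_integrableOn_Ioi] at this
    refine this.congr_fun (fun x _ => by simp [Function.comp, mul_neg]) measurableSet_Ici
  rwa [Measure.map_neg_eq_self (volume : Measure ℝ)] at h


lemma laplace_density_integral {b t : ℝ} (hb : 0 < b) (ht : |t| < 1 / b) :
    Integrable (fun x => (1 / (2 * b)) * exp (-|x| / b) * exp (t * x)) ∧
    ∫ x, (1 / (2 * b)) * exp (-|x| / b) * exp (t * x) = 1 / (1 - t ^ 2 * b ^ 2) := by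
  have hb' : b ≠ 0 := hb.ne'
  obtain ⟨ht1, ht2⟩ := abs_lt.mp ht
  have hs1 : 0 < 1 / b - t := by linarith
  have hs2 : 0 < 1 / b + t := by linarith
  have heq1 : ∀ x ∈ Ioi (0:ℝ),
      (1 / (2 * b)) * exp (-((1 / b - t) * x)) =
        (1 / (2 * b)) * exp (-|x| / b) * exp (t * x) := by
    intro x hx
    rw [abs_of_pos hx, mul_assoc, ← exp_add]
    congr 2
    field_simp; ring
  have heq2 : ∀ x ∈ Iic (0:ℝ),
      (1 / (2 * b)) * exp ((1 / b + t) * x) =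
        (1 / (2 * b)) * exp (-|x| / b) * exp (t * x) := by
    intro x hx
    rw [abs_of_nonpos hx, mul_assoc, ← exp_add]
    congr 2
    field_simp
  have hi1 : IntegrableOn (fun x => (1 / (2 * b)) * exp (-|x| / b) * exp (t * x)) (Ioi (0:ℝ)) := by
    have h : IntegrableOn (fun x => (1 / (2 * b)) * exp (-((1 / b - t) * x))) (Ioi (0:ℝ)) :=
      (integrableOn_exp_neg_mul_Ioi' hs1).const_mul _
    exact h.congr_fun heq1 measurableSet_Ioi
  have hi2 : IntegrableOn (fun x => (1 / (2 * b)) * exp (-|x| / b) * exp (t * x)) (Iic (0:ℝ)) := by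
    have h : IntegrableOn (fun x => (1 / (2 * b)) * exp ((1 / b + t) * x)) (Iic (0:ℝ)) :=
      (integrableOn_exp_mul_Iic' hs2).const_mul _
    exact h.congr_fun heq2 measurableSet_Iic
  have hint : Integrable (fun x => (1 / (2 * b)) * exp (-|x| / b) * exp (t * x)) := by
    have := hi2.union hi1
    rwa [Iic_union_Ioi, integrableOn_univ] at this
  refine ⟨hint, ?_⟩
  have hval1 : ∫ x in Ioi (0:ℝ), (1 / (2 * b)) * exp (-|x| / b) * exp (t * x)
      = (1 / (2 * b)) * (1 / b - t)⁻¹ := by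
    rw [← setIntegral_congr_fun measurableSet_Ioi heq1, integral_const_mul,
      integral_exp_neg_mul_Ioi' hs1]
  have hval2 : ∫ x in Iic (0:ℝ), (1 / (2 * b)) * exp (-|x| / b) * exp (t * x)
      = (1 / (2 * b)) * (1 / b + t)⁻¹ := by
    rw [← setIntegral_congr_fun measurableSet_Iic heq2, integral_const_mul,
      integral_exp_mul_Iic' hs2]
  have htb : t ^ 2 * b ^ 2 < 1 := by
    have h1 : |t| * b < 1 := by
      rw [lt_div_iff₀ hb] at ht
      exact ht
    have h0 : 0 ≤ |t| * b := by positivity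
    nlinarith [sq_abs t]
  have hne : 1 - t ^ 2 * b ^ 2 ≠ 0 := by linarith
  rw [← intervalIntegral.integral_Iic_add_Ioi hi2 hi1, hval1, hval2]
  have h1 : (1 / b - t) ≠ 0 := hs1.ne'
  have h2 : (1 / b + t) ≠ 0 := hs2.ne'
  have h3 : b * 2 + b ^ 2 * t * 2 ≠ 0 := by
    have e : b * 2 + b ^ 2 * t * 2 = 2 * b ^ 2 * (1 / b + t) := by field_simp
    rw [e]
    exact mul_ne_zero (by positivity) h2
  have h4 : b * 2 - b ^ 2 * t * 2 ≠ 0 := by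
    have e : b * 2 - b ^ 2 * t * 2 = 2 * b ^ 2 * (1 / b - t) := by field_simp
    rw [e]
    exact mul_ne_zero (by positivity) h1
  have h5 : (1:ℝ) + b * t ≠ 0 := by intro h; nlinarith [htb]
  have h6 : (1:ℝ) - b * t ≠ 0 := by intro h; nlinarith [htb]
  rw [show (1:ℝ) / b + t = (1 + b * t) / b by field_simp,
    show (1:ℝ) / b - t = (1 - b * t) / b by field_simp, inv_div, inv_div,
    show 1 - t ^ 2 * b ^ 2 = (1 + b * t) * (1 - b * t) by ring]
  field_simp
  ring

lemma laplace_mgf {Ω : Type*} [MeasurableSpace Ω] {P : Measure Ω}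
    {b t : ℝ} (hb : 0 < b) (ht : |t| < 1 / b) {X : Ω → ℝ} (hX : Measurable X)
    (hlaw : P.map X = laplaceMeasure b) :
    Integrable (fun ω => exp (t * X ω)) P ∧ mgf X P t = 1 / (1 - t ^ 2 * b ^ 2) := by
  have hd : ∀ x : ℝ, 0 ≤ (1 / (2 * b)) * exp (-|x| / b) := fun x => by positivity
  have hmeasd : Measurable fun x : ℝ => ((1 / (2 * b)) * exp (-|x| / b)).toNNReal := by
    measurability
  have hrw : laplaceMeasure b = volume.withDensity
      (fun x => (((1 / (2 * b)) * exp (-|x| / b)).toNNReal : ℝ≥0∞)) := by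
    unfold laplaceMeasure
    congr 1
  have key := laplace_density_integral hb ht
  have heqf : ∀ x : ℝ, ((1 / (2 * b)) * exp (-|x| / b)).toNNReal • exp (t * x)
      = (1 / (2 * b)) * exp (-|x| / b) * exp (t * x) := by
    intro x
    rw [NNReal.smul_def, Real.coe_toNNReal _ (hd x), smul_eq_mul]
  have hint_map : Integrable (fun x => exp (t * x)) (laplaceMeasure b) := by
    rw [hrw, integrable_withDensity_iff_integrable_smul hmeasd]
    exact key.1.congr (Filter.Eventually.of_forall fun x => (heqf x).symm)
  have hI : ∫ x, exp (t * x) ∂(laplaceMeasure b) = 1 / (1 - t ^ 2 * b ^ 2) := by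
    rw [hrw, integral_withDensity_eq_integral_smul hmeasd, ← key.2]
    congr 1
    ext x
    exact heqf x
  have hg : AEStronglyMeasurable (fun x : ℝ => exp (t * x)) (P.map X) :=
    ((measurable_const.mul measurable_id).exp :
      Measurable fun x : ℝ => exp (t * x)).aestronglyMeasurable
  constructor
  · have := (integrable_map_measure hg hX.aemeasurable).mp (by rwa [hlaw])
    exact this
  · rw [mgf, ← integral_map hX.aemeasurable hg, hlaw, hI]

lemma one_div_one_sub_le_exp {x : ℝ} (h0 : 0 ≤ x) (h1 : x ≤ 1 / 2) :
    1 / (1 - x) ≤ exp (2 * x) := by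
  have hx : 0 < 1 - x := by linarith
  have h2 : (0:ℝ) < 1 / (1 - x) := by positivity
  have hlog : Real.log (1 / (1 - x)) ≤ 2 * x := by
    refine (Real.log_le_sub_one_of_pos h2).trans ?_
    have he : 1 / (1 - x) - 1 = x / (1 - x) := by field_simp; ring
    rw [he, div_le_iff₀ hx]
    nlinarith
  calc 1 / (1 - x) = exp (Real.log (1 / (1 - x))) := (Real.exp_log h2).symm
    _ ≤ exp (2 * x) := exp_le_exp.mpr hlog

theorem stmt_9 {Ω : Type*} [MeasurableSpace Ω] (P : Measure Ω) [IsProbabilityMeasure P]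
    (k : ℕ) (hk : 1 ≤ k) (b : Fin k → ℝ) (hb : ∀ i, 0 < b i)
    (γ : Fin k → Ω → ℝ) (hmeas : ∀ i, Measurable (γ i))
    (hindep : iIndepFun γ P)
    (hlaw : ∀ i, P.map (γ i) = laplaceMeasure (b i))
    (δ : ℝ) (hδ : δ ∈ Set.Ioo (0 : ℝ) 1)
    (bM ν : ℝ) (hbM : IsGreatest (Set.range b) bM)
    (hν : ν = max (Real.sqrt (∑ i, (b i) ^ 2)) (bM * Real.sqrt (Real.log (2 / δ)))) :
    P {ω | ν * Real.sqrt (8 * Real.log (2 / δ)) < |∑ i, γ i ω|} ≤ ENNReal.ofReal δ := by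
  obtain ⟨hδ0, hδ1⟩ := hδ
  set L : ℝ := Real.log (2 / δ) with hLdef
  have hL : 0 < L := Real.log_pos ((one_lt_div hδ0).mpr (by linarith))
  set S : ℝ := ∑ i, (b i) ^ 2 with hSdef
  haveI : Nonempty (Fin k) := ⟨⟨0, hk⟩⟩
  have hS : 0 < S := Finset.sum_pos (fun i _ => pow_pos (hb i) 2) Finset.univ_nonempty
  have hν1 : Real.sqrt S ≤ ν := hν ▸ le_max_left _ _
  have hν2 : bM * Real.sqrt L ≤ ν := hν ▸ le_max_right _ _
  have hνpos : 0 < ν := lt_of_lt_of_le (Real.sqrt_pos.mpr hS) hν1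
  have hSν : S ≤ ν ^ 2 := by
    have := Real.sq_sqrt hS.le
    nlinarith [Real.sqrt_nonneg S]
  obtain ⟨i0, hi0⟩ := hbM.1
  have hbMpos : 0 < bM := hi0 ▸ hb i0
  have hbM_le : ∀ i, b i ≤ bM := fun i => hbM.2 ⟨i, rfl⟩
  have hνL : bM ^ 2 * L ≤ ν ^ 2 := by
    have h0 : 0 ≤ bM * Real.sqrt L := by positivity
    have := Real.sq_sqrt hL.le
    nlinarith
  set t : ℝ := Real.sqrt L / (Real.sqrt 2 * ν) with htdef
  have ht_pos : 0 < t := by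
    apply div_pos (Real.sqrt_pos.mpr hL)
    positivity
  have ht2 : t ^ 2 = L / (2 * ν ^ 2) := by
    rw [htdef, div_pow, mul_pow, Real.sq_sqrt hL.le, Real.sq_sqrt (by norm_num : (0:ℝ) ≤ 2)]
  have hsmall : ∀ i, t ^ 2 * (b i) ^ 2 ≤ 1 / 2 := by
    intro i
    rw [ht2, div_mul_eq_mul_div, div_le_iff₀ (by positivity)]
    nlinarith [mul_le_mul_of_nonneg_left (pow_le_pow_left₀ (hb i).le (hbM_le i) 2) hL.le]
  have htb : ∀ (s : ℝ), |s| = t → ∀ i, |s| < 1 / b i := by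
    intro s hs i
    rw [hs, lt_div_iff₀ (hb i)]
    nlinarith [hsmall i, mul_pos ht_pos (hb i)]
  have hmgf_i : ∀ (s : ℝ), |s| = t → ∀ i,
      Integrable (fun ω => exp (s * γ i ω)) P ∧
        mgf (γ i) P s = 1 / (1 - s ^ 2 * (b i) ^ 2) :=
    fun s hs i => laplace_mgf (hb i) (htb s hs i) (hmeas i) (hlaw i)
  have hmgf_sum : ∀ (s : ℝ), |s| = t →
      Integrable (fun ω => exp (s * (∑ i, γ i) ω)) P ∧
        mgf (∑ i, γ i) P s ≤ exp (2 * t ^ 2 * S) := by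
    intro s hs
    refine ⟨hindep.integrable_exp_mul_sum hmeas (fun i _ => (hmgf_i s hs i).1), ?_⟩
    rw [hindep.mgf_sum hmeas]
    have hs2 : s ^ 2 = t ^ 2 := by rw [← sq_abs s, hs]
    calc ∏ i, mgf (γ i) P s
        ≤ ∏ i, exp (2 * (t ^ 2 * (b i) ^ 2)) := by
          refine Finset.prod_le_prod (fun i _ => mgf_nonneg) (fun i _ => ?_)
          rw [(hmgf_i s hs i).2, hs2]
          exact one_div_one_sub_le_exp (by positivity) (hsmall i)
      _ = exp (2 * t ^ 2 * S) := by
          rw [← Real.exp_sum]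
          congr 1
          rw [hSdef, Finset.mul_sum]
          exact Finset.sum_congr rfl fun i _ => by ring
  set a : ℝ := ν * Real.sqrt (8 * L) with hadef
  have ha_pos : 0 < a := by
    apply mul_pos hνpos (Real.sqrt_pos.mpr (by positivity))
  have hta : t * a = 2 * L := by
    rw [htdef, hadef, Real.sqrt_mul (by norm_num : (0:ℝ) ≤ 8) L,
      show (8:ℝ) = 2 ^ 2 * 2 by norm_num,
      Real.sqrt_mul (by positivity) 2, Real.sqrt_sq (by norm_num : (0:ℝ) ≤ 2)]
    have hsL : Real.sqrt L * Real.sqrt L = L := Real.mul_self_sqrt hL.le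
    have h2 : Real.sqrt 2 ≠ 0 := by positivity
    field_simp
    linear_combination hsL
  have hbound : exp (-t * a) * exp (2 * t ^ 2 * S) ≤ δ / 2 := by
    rw [← Real.exp_add]
    have h1 : 2 * t ^ 2 * S ≤ L := by
      rw [ht2]
      have he : 2 * (L / (2 * ν ^ 2)) * S = L * S / ν ^ 2 := by field_simp
      rw [he, div_le_iff₀ (by positivity)]
      nlinarith [mul_le_mul_of_nonneg_left hSν hL.le]
    have h2 : -t * a + 2 * t ^ 2 * S ≤ -L := by
      rw [neg_mul, hta]; linarith
    calc exp (-t * a + 2 * t ^ 2 * S) ≤ exp (-L) := exp_le_exp.mpr h2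
      _ = δ / 2 := by
          rw [hLdef, Real.exp_neg, Real.exp_log (by positivity), inv_div]
  have habs_t : |t| = t := abs_of_pos ht_pos
  have habs_nt : |(-t)| = t := by rw [abs_neg, habs_t]
  -- upper tail
  have hup : (P {ω | a ≤ (∑ i, γ i) ω}).toReal ≤ δ / 2 := by
    refine (measure_ge_le_exp_mul_mgf a ht_pos.le (hmgf_sum t habs_t).1).trans ?_
    calc exp (-t * a) * mgf (∑ i, γ i) P t
        ≤ exp (-t * a) * exp (2 * t ^ 2 * S) := by
          exact mul_le_mul_of_nonneg_left (hmgf_sum t habs_t).2 (exp_pos _).le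
      _ ≤ δ / 2 := hbound
  -- lower tail
  have hlo : (P {ω | (∑ i, γ i) ω ≤ -a}).toReal ≤ δ / 2 := by
    refine (measure_le_le_exp_mul_mgf (-a) (neg_nonpos.mpr ht_pos.le)
      (hmgf_sum (-t) habs_nt).1).trans ?_
    have : -(-t) * -a = -t * a := by ring
    rw [this]
    calc exp (-t * a) * mgf (∑ i, γ i) P (-t)
        ≤ exp (-t * a) * exp (2 * t ^ 2 * S) := by
          exact mul_le_mul_of_nonneg_left (hmgf_sum (-t) habs_nt).2 (exp_pos _).le
      _ ≤ δ / 2 := hbound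
  have hsub : {ω | ν * Real.sqrt (8 * Real.log (2 / δ)) < |∑ i, γ i ω|} ⊆
      {ω | a ≤ (∑ i, γ i) ω} ∪ {ω | (∑ i, γ i) ω ≤ -a} := by
    intro ω hω
    simp only [Set.mem_setOf_eq, Set.mem_union, Finset.sum_apply] at hω ⊢
    rcases lt_abs.mp hω with h | h
    · left; linarith
    · right; linarith
  have toR : ∀ (A : Set Ω), (P A).toReal ≤ δ / 2 → P A ≤ ENNReal.ofReal (δ / 2) := by
    intro A hA
    rw [← ENNReal.ofReal_toReal (measure_ne_top P A)]
    exact ENNReal.ofReal_le_ofReal hA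
  calc P {ω | ν * Real.sqrt (8 * Real.log (2 / δ)) < |∑ i, γ i ω|}
      ≤ P ({ω | a ≤ (∑ i, γ i) ω} ∪ {ω | (∑ i, γ i) ω ≤ -a}) := measure_mono hsub
    _ ≤ P {ω | a ≤ (∑ i, γ i) ω} + P {ω | (∑ i, γ i) ω ≤ -a} := measure_union_le _ _
    _ ≤ ENNReal.ofReal (δ / 2) + ENNReal.ofReal (δ / 2) := add_le_add (toR _ hup) (toR _ hlo)
    _ = ENNReal.ofReal δ := by
        rw [← ENNReal.ofReal_add (by positivity) (by positivity)]
        norm_num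
end

section
/- Let 0 < g ≤ b be reals, ε > 0, β ∈ (0,1), and set ℓ = ⌈(2/ε)·ln(2b/(g·β)) − 1⌉; assume ℓ ≥ 0. Let y_0 = 0 < y_1 < y_2 < … < y_{2ℓ+2} < y_{2ℓ+3} = b be real numbers satisfying y_{k+1} − y_k ≥ g for all 1 ≤ k ≤ 2ℓ+1. For 0 ≤ k ≤ 2ℓ+2 define the weight w_k = exp(−(ε/2)·|k − (ℓ+1)|)·(y_{k+1} − y_k). Then w_0 + w_{2ℓ+2} ≤ β · Σ_{k=0}^{2ℓ+2} w_k. (Consequently, the exponential mechanism run on the slice y_1, …, y_{2ℓ+2} with target rank ℓ+1 — which selects interval [y_k, y_{k+1}] with probability proportional to w_k and outputs a uniform point of it — outputs a point outside (y_1, y_{2ℓ+2}) with probability at most β.) -/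
theorem stmt_11 (g b ε β : ℝ) (hg : 0 < g) (hgb : g ≤ b) (hε : 0 < ε)
    (hβ : β ∈ Set.Ioo (0 : ℝ) 1)
    (ℓ : ℤ) (hℓ : ℓ = ⌈(2 / ε) * Real.log (2 * b / (g * β)) - 1⌉) (hℓ0 : 0 ≤ ℓ)
    (y : ℤ → ℝ) (hy0 : y 0 = 0) (hyb : y (2 * ℓ + 3) = b)
    (hmono : StrictMonoOn y (Set.Icc (0 : ℤ) (2 * ℓ + 3)))
    (hgap : ∀ k : ℤ, 1 ≤ k → k ≤ 2 * ℓ + 1 → g ≤ y (k + 1) - y k)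
    (w : ℤ → ℝ)
    (hw : ∀ k : ℤ, w k =
      Real.exp (-(ε / 2) * |(k : ℝ) - ((ℓ : ℝ) + 1)|) * (y (k + 1) - y k)) :
    w 0 + w (2 * ℓ + 2) ≤ β * ∑ k ∈ Finset.Icc (0 : ℤ) (2 * ℓ + 2), w k := by
  obtain ⟨hβ0, hβ1⟩ := hβ
  have hb : (0:ℝ) < b := lt_of_lt_of_le hg hgb
  have hℓR : (0:ℝ) ≤ (ℓ:ℝ) := by exact_mod_cast hℓ0
  set L := Real.log (2 * b / (g * β)) with hLdef
  have hx : (0:ℝ) < 2 * b / (g * β) := by positivity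
  have hceil : (2 / ε) * L - 1 ≤ (ℓ : ℝ) := by
    rw [hℓ]; exact_mod_cast Int.le_ceil _
  have hE : Real.exp (-(ε/2) * ((ℓ:ℝ)+1)) ≤ g * β / (2 * b) := by
    have h2 : (2/ε) * L ≤ (ℓ:ℝ) + 1 := by linarith
    have h1 : L ≤ (ε/2) * ((ℓ:ℝ)+1) := by
      have hc : L = (ε/2) * ((2/ε) * L) := by field_simp
      rw [hc]
      exact mul_le_mul_of_nonneg_left h2 (by positivity)
    calc Real.exp (-(ε/2) * ((ℓ:ℝ)+1)) ≤ Real.exp (-L) := by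
          apply Real.exp_le_exp.2; nlinarith
      _ = g * β / (2 * b) := by
          rw [Real.exp_neg, hLdef, Real.exp_log hx]
          field_simp
  set E := Real.exp (-(ε/2) * ((ℓ:ℝ)+1)) with hEdef
  have hEpos : 0 < E := Real.exp_pos _
  have habs0 : |((0:ℤ):ℝ) - ((ℓ:ℝ)+1)| = (ℓ:ℝ)+1 := by
    rw [show ((0:ℤ):ℝ) - ((ℓ:ℝ)+1) = -((ℓ:ℝ)+1) by push_cast; ring,
      abs_neg, abs_of_nonneg (by linarith)]
  have habs2 : |(((2*ℓ+2:ℤ)):ℝ) - ((ℓ:ℝ)+1)| = (ℓ:ℝ)+1 := by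
    rw [show (((2*ℓ+2:ℤ)):ℝ) - ((ℓ:ℝ)+1) = (ℓ:ℝ)+1 by push_cast; ring,
      abs_of_nonneg (by linarith)]
  have hw0 : w 0 = E * (y 1) := by
    rw [hw 0, habs0, hy0, ← hEdef]; norm_num
  have hw2 : w (2*ℓ+2) = E * (b - y (2*ℓ+2)) := by
    rw [hw (2*ℓ+2), habs2, show (2*ℓ+2+1:ℤ) = 2*ℓ+3 by ring, hyb]
  have hy12 : y 1 ≤ y (2*ℓ+2) := by
    apply (hmono (by simp [Set.mem_Icc]; omega) (by simp [Set.mem_Icc]; omega)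
      (by omega)).le
  -- all weights nonneg on the range
  have hwnn : ∀ k ∈ Finset.Icc (0:ℤ) (2*ℓ+2), 0 ≤ w k := by
    intro k hk
    rw [Finset.mem_Icc] at hk
    rw [hw k]
    apply mul_nonneg (Real.exp_nonneg _)
    have := hmono (a := k) (b := k+1) (by simp [Set.mem_Icc]; omega)
      (by simp [Set.mem_Icc]; omega) (by omega)
    linarith
  -- middle weight is at least g
  have hmid : g ≤ w (ℓ+1) := by
    rw [hw (ℓ+1)]
    have : |((ℓ+1:ℤ):ℝ) - ((ℓ:ℝ)+1)| = 0 := by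
      rw [abs_eq_zero]; push_cast; ring
    rw [this]
    simp only [mul_zero, Real.exp_zero, one_mul]
    exact hgap (ℓ+1) (by omega) (by omega)
  have hsum : g ≤ ∑ k ∈ Finset.Icc (0:ℤ) (2*ℓ+2), w k := by
    calc g ≤ w (ℓ+1) := hmid
      _ ≤ _ := Finset.single_le_sum hwnn (by rw [Finset.mem_Icc]; omega)
  have hEb : E * b ≤ g * β / 2 := by
    calc E * b ≤ (g * β / (2*b)) * b := by
          exact mul_le_mul_of_nonneg_right hE hb.le
      _ = g * β / 2 := by field_simp
  calc w 0 + w (2*ℓ+2) = E * (y 1 + (b - y (2*ℓ+2))) := by rw [hw0, hw2]; ring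
    _ ≤ E * b := by nlinarith
    _ ≤ g * β / 2 := hEb
    _ ≤ β * g := by nlinarith
    _ ≤ β * ∑ k ∈ Finset.Icc (0:ℤ) (2*ℓ+2), w k := by nlinarith
end
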